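/- Let X ⊆ ℝⁿ be closed convex, f convex differentiable whose gradient satisfies the local M-descent inequality at x along x⁺⁺, φ convex, σ > 0, η ≥ 2M > 0, x̄ ∈ ℝⁿ. Let x*(σ; x̄) minimize f + φ + (σ/2)‖· - x̄‖² over X and G_η(x) := η(x - x⁺(η;x)) be the projected gradient. Then ‖G_η(x)‖ ≤ (3σ + 2η)‖x*(σ;x̄) - x‖ + σ‖x*(σ;x̄) - x̄‖. -/

import Mathlib

/-! The auxiliary point `x⁺⁺` sits between `x⁺` and `x*`. All three are minimizers of strongly
convex problems over `X`, so each satisfies a quadratic-growth inequality. Adding those of `x⁺⁺`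
and `x*` to the gradient inequality for `f` at `x` and the descent inequality at `x⁺⁺` gives
`‖x* - x⁺⁺‖ ≤ ‖x* - x‖`. The objectives of `x⁺` and `x⁺⁺` differ only by `(σ/2)‖· - x̄‖²`, and
adding their inequalities gives `η‖x⁺ - x⁺⁺‖ ≤ σ‖x⁺⁺ - x̄‖`. The triangle inequality does the rest. -/

open scoped RealInnerProductSpace

open Set Filter Topology

section
variable {E : Type*} [NormedAddCommGroup E] [InnerProductSpace ℝ E]

theorem ConvexOn.add_fderiv_sub_le {F : Type*} [NormedAddCommGroup F] [NormedSpace ℝ F]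
    {s : Set F} {f : F → ℝ} {f' : F →L[ℝ] ℝ} {x y : F}
    (hf : ConvexOn ℝ s f) (hx : x ∈ s) (hy : y ∈ s) (hf' : HasFDerivAt f f' x) :
    f x + f' (y - x) ≤ f y := by
  let ℓ : ℝ →ᵃ[ℝ] F := AffineMap.lineMap x y
  have hline : ConvexOn ℝ (ℓ ⁻¹' s) (f ∘ ℓ) := hf.comp_affineMap ℓ
  have hderiv : HasDerivAt (f ∘ ℓ) (f' (y - x)) 0 := by
    have hℓ : HasDerivAt ℓ (y - x) 0 := AffineMap.hasDerivAt_lineMap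
    exact (by simpa [ℓ] using hf' : HasFDerivAt f f' (ℓ 0)).comp_hasDerivAt 0 hℓ
  have hℓ0 : ℓ 0 = x := AffineMap.lineMap_apply_zero x y
  have hℓ1 : ℓ 1 = y := AffineMap.lineMap_apply_one x y
  have hslope := hline.le_slope_of_hasDerivAt (by simpa [hℓ0]) (by simpa [hℓ1]) one_pos hderiv
  simp only [slope_def_field, Function.comp_apply, hℓ0, hℓ1, sub_zero, div_one] at hslope
  linarith

theorem StrongConvexOn.add {s : Set E} {f g : E → ℝ} {m n : ℝ}
    (hf : StrongConvexOn s m f) (hg : StrongConvexOn s n g) : StrongConvexOn s (m + n) (f + g) := by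
  unfold StrongConvexOn at *
  convert hf.add hg using 1
  funext r
  simp only [Pi.add_apply]
  ring

theorem strongConvexOn_mul_sq_norm_sub {s : Set E} (hs : Convex ℝ s) (m : ℝ) (y : E) :
    StrongConvexOn s m (fun u => m / 2 * ‖u - y‖ ^ 2) := by
  refine strongConvexOn_iff_convex.mpr ⟨hs, fun a _ b _ s t hs ht hst => le_of_eq ?_⟩
  simp only [norm_sub_sq_real, inner_add_left, real_inner_smul_left, smul_eq_mul]
  linear_combination (-(m / 2) * ‖y‖ ^ 2) * hst

theorem ConvexOn.strongConvexOn_add_mul_sq_norm_sub {s : Set E} {f : E → ℝ} (hf : ConvexOn ℝ s f)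
    (m : ℝ) (y : E) : StrongConvexOn s m (fun u => f u + m / 2 * ‖u - y‖ ^ 2) := by
  simpa [Pi.add_def] using (strongConvexOn_zero.mpr hf).add (strongConvexOn_mul_sq_norm_sub hf.1 m y)

theorem StrongConvexOn.add_mul_sq_norm_sub_le_of_isMinOn {s : Set E} {f : E → ℝ} {m : ℝ} {x y : E}
    (hf : StrongConvexOn s m f) (hx : x ∈ s) (hmin : IsMinOn f s x) (hy : y ∈ s) :
    f x + m / 2 * ‖y - x‖ ^ 2 ≤ f y := by
  -- compare `x` with the points `(1 - t) • x + t • y` of the segment and let `t → 0⁺`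
  have hlim : Tendsto (fun t : ℝ => f x + (1 - t) * (m / 2 * ‖y - x‖ ^ 2)) (𝓝[>] 0)
      (𝓝 (f x + m / 2 * ‖y - x‖ ^ 2)) := by
    have hc : Continuous (fun t : ℝ => f x + (1 - t) * (m / 2 * ‖y - x‖ ^ 2)) := by fun_prop
    simpa using (hc.tendsto 0).mono_left nhdsWithin_le_nhds
  refine le_of_tendsto hlim ?_
  filter_upwards [Ioo_mem_nhdsGT (one_pos : (0 : ℝ) < 1)] with t ⟨ht0, ht1⟩
  have hconv := hf.2 hx hy (by linarith : 0 ≤ 1 - t) ht0.le (by ring)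
  have hle := isMinOn_iff.mp hmin _ (hf.1 hx hy (by linarith : 0 ≤ 1 - t) ht0.le (by ring))
  rw [norm_sub_rev] at hconv
  simp only [smul_eq_mul] at hconv
  nlinarith

theorem mul_norm_sub_le_of_isMinOn_perturbed {s : Set E} {h : E → ℝ} {μ σ : ℝ} {x y a b : E}
    (hh : ConvexOn ℝ s h) (hσ : 0 ≤ σ)
    (ha : a ∈ s) (ha_min : IsMinOn (fun u => h u + μ / 2 * ‖u - x‖ ^ 2) s a)
    (hb : b ∈ s)
    (hb_min : IsMinOn (fun u => h u + σ / 2 * ‖u - y‖ ^ 2 + μ / 2 * ‖u - x‖ ^ 2) s b) :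
    μ * ‖a - b‖ ≤ σ * ‖b - y‖ := by
  have hga := (hh.strongConvexOn_add_mul_sq_norm_sub μ x).add_mul_sq_norm_sub_le_of_isMinOn
    ha ha_min hb
  have hgb := ((hh.strongConvexOn_add_mul_sq_norm_sub σ y).add
    (strongConvexOn_mul_sq_norm_sub hh.1 μ x)).add_mul_sq_norm_sub_le_of_isMinOn hb hb_min ha
  simp only [Pi.add_apply] at hgb
  have hay : ‖a - y‖ ^ 2 = ‖a - b‖ ^ 2 + 2 * ⟪a - b, b - y⟫ + ‖b - y‖ ^ 2 := by
    rw [← norm_add_sq_real, sub_add_sub_cancel]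
  have hkey : μ * ‖a - b‖ ^ 2 ≤ σ * (‖a - b‖ * ‖b - y‖) := by
    rw [norm_sub_rev b a] at hga
    nlinarith [real_inner_le_norm (a - b) (b - y)]
  rcases (norm_nonneg (a - b)).eq_or_lt with hab | hab
  · rw [← hab, mul_zero]
    positivity
  · nlinarith

theorem norm_sub_le_of_isMinOn_linearized [CompleteSpace E] {s : Set E} {f φ : E → ℝ}
    {g x y xp xs : E} {σ η M : ℝ} (hs : Convex ℝ s) (hf : ConvexOn ℝ univ f)
    (hg : HasGradientAt f g x) (hφ : ConvexOn ℝ s φ) (hσ : 0 ≤ σ) (hη : 0 < η) (hMη : M ≤ η)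
    (hxp : xp ∈ s)
    (hxp_min : IsMinOn (fun u => ⟪g, u⟫ + φ u + σ / 2 * ‖u - y‖ ^ 2 + η / 2 * ‖u - x‖ ^ 2) s xp)
    (hdesc : f xp ≤ f x + ⟪g, xp - x⟫ + M / 2 * ‖xp - x‖ ^ 2)
    (hxs : xs ∈ s) (hxs_min : IsMinOn (fun u => f u + φ u + σ / 2 * ‖u - y‖ ^ 2) s xs) :
    ‖xs - xp‖ ≤ ‖xs - x‖ := by
  have hlin : ConvexOn ℝ s (fun u => ⟪g, u⟫ + φ u) := ((innerₛₗ ℝ g).convexOn hs).add hφ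
  have hgxp := ((hlin.strongConvexOn_add_mul_sq_norm_sub σ y).add
    (strongConvexOn_mul_sq_norm_sub hs η x)).add_mul_sq_norm_sub_le_of_isMinOn hxp hxp_min hxs
  have hgxs := (((hf.subset (subset_univ s) hs).add hφ).strongConvexOn_add_mul_sq_norm_sub σ y
    ).add_mul_sq_norm_sub_le_of_isMinOn hxs hxs_min hxp
  have hsupp := hf.add_fderiv_sub_le (mem_univ x) (mem_univ xs) hg.hasFDerivAt
  simp only [Pi.add_apply] at hgxp hgxs
  rw [InnerProductSpace.toDual_apply_apply, inner_sub_right] at hsupp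
  rw [inner_sub_right] at hdesc
  rw [norm_sub_rev xp xs] at hgxs
  have hsq : ‖xs - xp‖ ^ 2 ≤ ‖xs - x‖ ^ 2 := by
    nlinarith [sq_nonneg ‖xs - xp‖, sq_nonneg ‖xp - x‖]
  exact le_of_sq_le_sq hsq (norm_nonneg _)

end

theorem stmt_16_general {n : ℕ} (X : Set (EuclideanSpace ℝ (Fin n)))
    (hXconv : Convex ℝ X)
    (f φ : EuclideanSpace ℝ (Fin n) → ℝ)
    (hf : ConvexOn ℝ Set.univ f) (hdiff : Differentiable ℝ f)
    (hφ : ConvexOn ℝ Set.univ φ)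
    (σ M η : ℝ) (hσ : 0 < σ) (hM : 0 < M) (hη : η ≥ 2 * M)
    (x xb xpp xplus xstar : EuclideanSpace ℝ (Fin n))
    (hxpp : xpp ∈ X ∧ ∀ u ∈ X,
      ⟪gradient f x, xpp⟫ + φ xpp + σ / 2 * ‖xpp - xb‖ ^ 2 + η / 2 * ‖xpp - x‖ ^ 2 ≤
      ⟪gradient f x, u⟫ + φ u + σ / 2 * ‖u - xb‖ ^ 2 + η / 2 * ‖u - x‖ ^ 2)
    (hdesc : f xpp ≤ f x + ⟪gradient f x, xpp - x⟫ + M / 2 * ‖xpp - x‖ ^ 2)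
    (hxplus : xplus ∈ X ∧ ∀ u ∈ X,
      ⟪gradient f x, xplus⟫ + φ xplus + η / 2 * ‖xplus - x‖ ^ 2 ≤
      ⟪gradient f x, u⟫ + φ u + η / 2 * ‖u - x‖ ^ 2)
    (hxstar : xstar ∈ X ∧ ∀ u ∈ X,
      f xstar + φ xstar + σ / 2 * ‖xstar - xb‖ ^ 2 ≤
      f u + φ u + σ / 2 * ‖u - xb‖ ^ 2) :
    η * ‖x - xplus‖ ≤ (3 * σ + 2 * η) * ‖xstar - x‖ + σ * ‖xstar - xb‖ := by
  have hη0 : 0 < η := by linarith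
  have hφX : ConvexOn ℝ X φ := hφ.subset (Set.subset_univ X) hXconv
  have hlin : ConvexOn ℝ X (fun u => ⟪gradient f x, u⟫ + φ u) :=
    ((innerₛₗ ℝ (gradient f x)).convexOn hXconv).add hφX
  have hstar_pp : ‖xstar - xpp‖ ≤ ‖xstar - x‖ :=
    norm_sub_le_of_isMinOn_linearized hXconv hf (hdiff x).hasGradientAt hφX hσ.le hη0
      (by linarith) hxpp.1 (isMinOn_iff.mpr hxpp.2) hdesc hxstar.1 (isMinOn_iff.mpr hxstar.2)
  have hplus_pp : η * ‖xplus - xpp‖ ≤ σ * ‖xpp - xb‖ :=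
    mul_norm_sub_le_of_isMinOn_perturbed hlin hσ.le hxplus.1 (isMinOn_iff.mpr hxplus.2)
      hxpp.1 (isMinOn_iff.mpr hxpp.2)
  have hx_plus : ‖x - xplus‖ ≤ ‖xstar - x‖ + ‖xstar - xpp‖ + ‖xplus - xpp‖ := by
    calc ‖x - xplus‖ ≤ ‖x - xpp‖ + ‖xpp - xplus‖ := norm_sub_le_norm_sub_add_norm_sub ..
      _ ≤ ‖x - xstar‖ + ‖xstar - xpp‖ + ‖xpp - xplus‖ := by
        gcongr
        exact norm_sub_le_norm_sub_add_norm_sub ..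
      _ = _ := by rw [norm_sub_rev x, norm_sub_rev xpp]
  have hpp_b : ‖xpp - xb‖ ≤ ‖xstar - xpp‖ + ‖xstar - xb‖ := by
    simpa only [norm_sub_rev xpp xstar] using norm_sub_le_norm_sub_add_norm_sub xpp xstar xb
  calc η * ‖x - xplus‖
      ≤ η * ‖xstar - x‖ + η * ‖xstar - xpp‖ + η * ‖xplus - xpp‖ := by
        have := mul_le_mul_of_nonneg_left hx_plus hη0.le
        linarith
    _ ≤ η * ‖xstar - x‖ + η * ‖xstar - x‖ + σ * (‖xstar - x‖ + ‖xstar - xb‖) := by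
        have hη_pp := mul_le_mul_of_nonneg_left hstar_pp hη0.le
        have hσ_b := mul_le_mul_of_nonneg_left (hpp_b.trans (add_le_add_left hstar_pp _)) hσ.le
        linarith
    _ ≤ (3 * σ + 2 * η) * ‖xstar - x‖ + σ * ‖xstar - xb‖ := by
        have := mul_nonneg hσ.le (norm_nonneg (xstar - x))
        linarith

theorem stmt_16 {n : ℕ} (X : Set (EuclideanSpace ℝ (Fin n)))
    (hXne : X.Nonempty) (hXclosed : IsClosed X) (hXconv : Convex ℝ X)
    (f φ : EuclideanSpace ℝ (Fin n) → ℝ)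
    (hf : ConvexOn ℝ Set.univ f) (hdiff : Differentiable ℝ f)
    (hφ : ConvexOn ℝ Set.univ φ)
    (σ M η : ℝ) (hσ : 0 < σ) (hM : 0 < M) (hη : η ≥ 2 * M)
    (x xb xpp xplus xstar : EuclideanSpace ℝ (Fin n))
    (hxpp : xpp ∈ X ∧ ∀ u ∈ X,
      ⟪gradient f x, xpp⟫ + φ xpp + σ / 2 * ‖xpp - xb‖ ^ 2 + η / 2 * ‖xpp - x‖ ^ 2 ≤
      ⟪gradient f x, u⟫ + φ u + σ / 2 * ‖u - xb‖ ^ 2 + η / 2 * ‖u - x‖ ^ 2)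
    (hdesc : f xpp ≤ f x + ⟪gradient f x, xpp - x⟫ + M / 2 * ‖xpp - x‖ ^ 2)
    (hxplus : xplus ∈ X ∧ ∀ u ∈ X,
      ⟪gradient f x, xplus⟫ + φ xplus + η / 2 * ‖xplus - x‖ ^ 2 ≤
      ⟪gradient f x, u⟫ + φ u + η / 2 * ‖u - x‖ ^ 2)
    (hxstar : xstar ∈ X ∧ ∀ u ∈ X,
      f xstar + φ xstar + σ / 2 * ‖xstar - xb‖ ^ 2 ≤
      f u + φ u + σ / 2 * ‖u - xb‖ ^ 2) :
    η * ‖x - xplus‖ ≤ (3 * σ + 2 * η) * ‖xstar - x‖ + σ * ‖xstar - xb‖ :=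
  stmt_16_general X hXconv f φ hf hdiff hφ σ M η hσ hM hη x xb xpp xplus xstar hxpp hdesc hxplus
    hxstar
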